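/- Let G be a finite graph with symmetric edge weights, Ω a finite subset of vertices with at least two boundary vertices, and λ_1(Ω) the first nontrivial eigenvalue of the Dirichlet-to-Neumann operator Λ on δΩ. Then for arbitrary positive constants a > 0 and k > 0, λ_1(Ω) ≥ ( (2 h_E(Ω̃) μ_1(k) − a(k + μ_1(k))) a ) / ( a² + 2 μ_1(k) ), where μ_1(k) = inf over nonzero φ : Ω̄ → ℝ of ( D_Ω(φ) + k Σ_{x∈δΩ} φ(x)² m_x ) / ( Σ_{x∈Ω} φ(x)² m_x ) is the first eigenvalue of the Robin problem Δu + μ_1(k)u = 0 on Ω, ∂u/∂n + ku = 0 on δΩ. -/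

import Mathlib

/-!
Let `u` be harmonic with `∑_{δΩ} u² m = 1` and `∑_{δΩ} u m = 0`, and split `u - c` at a weighted
median `c` of its boundary values into `(u - c)⁺` and `(u - c)⁻`. Each part `v` is supported on at
most half of `δΩ`, so the co-area formula over its superlevel sets gives
`h_E ∑_{δΩ} v² m ≤ ∑_e |v(x)² - v(y)²|`. By Cauchy–Schwarz the right side is at most
`(D(v) (2 ∑_Ω v² m + 2 ∑_{δΩ} v² m))^{1/2}`, the Robin quotient bounds `μ₁(k) ∑_Ω v² m` by
`D(v) + k ∑_{δΩ} v² m`, and AM–GM with weight `a` turns this into `C ∑_{δΩ} v² m ≤ D(v)`, where `C`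
is the constant of the theorem. Adding the two parts and using `D((u-c)⁺) + D((u-c)⁻) ≤ D(u)` and
`∑_{δΩ} (u - c)² m = 1 + c² m(δΩ) ≥ 1` gives `C ≤ D(u)`. The infimum defining `λ₁` is over a
nonempty set because harmonic extensions exist.
-/

open scoped Classical
open Finset

variable {V : Type*} [Fintype V]

/-- The vertex boundary δΩ of a finite set Ω of vertices. -/
noncomputable def bdry (μ : V → V → ℝ) (Ω : Finset V) : Finset V :=
  Finset.univ.filter fun x => x ∉ Ω ∧ ∃ y ∈ Ω, 0 < μ x y

/-- Ω̄ = Ω ∪ δΩ. -/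
noncomputable def clos (μ : V → V → ℝ) (Ω : Finset V) : Finset V :=
  Ω ∪ bdry μ Ω

/-- The vertex measure m on Ω̄. -/
noncomputable def vm (μ : V → V → ℝ) (Ω : Finset V) (x : V) : ℝ :=
  if x ∈ Ω then ∑ y, μ x y else ∑ y ∈ Ω, μ x y

/-- m(B) = Σ_{x ∈ B} m_x. -/
noncomputable def msum (μ : V → V → ℝ) (Ω : Finset V) (B : Finset V) : ℝ :=
  ∑ x ∈ B, vm μ Ω x

/-- Sum over the edges e = {x,y} of E(Ω,Ω̄) of μ_{xy} · F x y (for symmetric F). -/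
noncomputable def edgeSum (μ : V → V → ℝ) (Ω : Finset V) (F : V → V → ℝ) : ℝ :=
  (∑ x ∈ Ω, ∑ y ∈ Ω, μ x y * F x y) / 2 +
    ∑ x ∈ Ω, ∑ y ∈ bdry μ Ω, μ x y * F x y

/-- Dirichlet energy D_Ω(f). -/
noncomputable def dirichlet (μ : V → V → ℝ) (Ω : Finset V) (f : V → ℝ) : ℝ :=
  edgeSum μ Ω fun x y => (f x - f y) ^ 2

/-- Dirichlet form D_Ω(f,g). -/
noncomputable def dform (μ : V → V → ℝ) (Ω : Finset V) (f g : V → ℝ) : ℝ :=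
  edgeSum μ Ω fun x y => (f x - f y) * (g x - g y)

/-- μ(∂_Ω A): total weight of the edges of E(Ω,Ω̄) with exactly one endpoint in A. -/
noncomputable def cut (μ : V → V → ℝ) (Ω : Finset V) (A : Finset V) : ℝ :=
  edgeSum μ Ω fun x y => if (x ∈ A) ↔ (y ∈ A) then 0 else 1

/-- The graph Laplacian Δf(x) (used for x ∈ Ω). -/
noncomputable def lap (μ : V → V → ℝ) (Ω : Finset V) (f : V → ℝ) (x : V) : ℝ :=
  (∑ y, μ x y * (f y - f x)) / vm μ Ω x

/-- The outward normal derivative ∂f/∂n(z) (used for z ∈ δΩ). -/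
noncomputable def nderiv (μ : V → V → ℝ) (Ω : Finset V) (f : V → ℝ) (z : V) : ℝ :=
  (∑ x ∈ Ω, μ z x * (f z - f x)) / vm μ Ω z

/-- f is harmonic on Ω. -/
def IsHarmonic (μ : V → V → ℝ) (Ω : Finset V) (u : V → ℝ) : Prop :=
  ∀ x ∈ Ω, lap μ Ω u x = 0

/-- Adjacency in the graph Ω̃ = (Ω̄, E(Ω,Ω̄)). -/
def tilAdj (μ : V → V → ℝ) (Ω : Finset V) (x y : V) : Prop :=
  0 < μ x y ∧ (x ∈ Ω ∨ y ∈ Ω)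

/-- The graph Ω̃ is connected. -/
def TilConnected (μ : V → V → ℝ) (Ω : Finset V) : Prop :=
  ∀ x ∈ clos μ Ω, ∀ y ∈ clos μ Ω, Relation.ReflTransGen (tilAdj μ Ω) x y

/-- λ₁(Ω): the first nontrivial eigenvalue of the Dirichlet-to-Neumann operator,
characterized by its Rayleigh quotient. -/
noncomputable def lambda1 (μ : V → V → ℝ) (Ω : Finset V) : ℝ :=
  sInf { r : ℝ | ∃ u : V → ℝ, IsHarmonic μ Ω u ∧
    (∑ x ∈ bdry μ Ω, u x ^ 2 * vm μ Ω x) = 1 ∧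
    (∑ x ∈ bdry μ Ω, u x * vm μ Ω x) = 0 ∧
    r = dirichlet μ Ω u }

/-- The Escobar-type Cheeger constant h_E(Ω̃). -/
noncomputable def hE (μ : V → V → ℝ) (Ω : Finset V) : ℝ :=
  sInf { r : ℝ | ∃ A : Finset V, A ⊆ clos μ Ω ∧
    0 < msum μ Ω (A ∩ bdry μ Ω) ∧
    msum μ Ω (A ∩ bdry μ Ω) ≤ msum μ Ω (bdry μ Ω) / 2 ∧
    r = cut μ Ω A / msum μ Ω (A ∩ bdry μ Ω) }

/-- The Jammes-type Cheeger constant h_J(Ω̃). -/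
noncomputable def hJ (μ : V → V → ℝ) (Ω : Finset V) : ℝ :=
  sInf { r : ℝ | ∃ A : Finset V, A ⊆ clos μ Ω ∧
    (A ∩ bdry μ Ω).Nonempty ∧
    msum μ Ω A ≤ msum μ Ω (clos μ Ω) / 2 ∧
    r = cut μ Ω A / msum μ Ω (A ∩ bdry μ Ω) }

/-- The classical Cheeger constant h(Ω̃). -/
noncomputable def cheeger (μ : V → V → ℝ) (Ω : Finset V) : ℝ :=
  sInf { r : ℝ | ∃ A : Finset V, A ⊆ clos μ Ω ∧ A.Nonempty ∧
    msum μ Ω A ≤ msum μ Ω (clos μ Ω) / 2 ∧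
    r = cut μ Ω A / msum μ Ω A }

/-- μ₁(k): the first eigenvalue of the Robin problem, via its Rayleigh quotient. -/
noncomputable def mu1 (μ : V → V → ℝ) (Ω : Finset V) (k : ℝ) : ℝ :=
  sInf { r : ℝ | ∃ φ : V → ℝ, 0 < (∑ x ∈ Ω, φ x ^ 2 * vm μ Ω x) ∧
    r = (dirichlet μ Ω φ + k * ∑ x ∈ bdry μ Ω, φ x ^ 2 * vm μ Ω x) /
          (∑ x ∈ Ω, φ x ^ 2 * vm μ Ω x) }

lemma abs_sum_mul_div_sum_le {ι : Type*} (s : Finset ι) {w f : ι → ℝ}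
    (hw : ∀ i ∈ s, 0 ≤ w i) {M : ℝ} (hM : 0 ≤ M) (hf : ∀ i ∈ s, |f i| ≤ M) :
    |(∑ i ∈ s, w i * f i) / ∑ i ∈ s, w i| ≤ M := by
  rw [abs_div, abs_of_nonneg (Finset.sum_nonneg hw)]
  refine div_le_of_le_mul₀ (Finset.sum_nonneg hw) hM ?_
  calc |∑ i ∈ s, w i * f i| ≤ ∑ i ∈ s, w i * |f i| := by
        refine (Finset.abs_sum_le_sum_abs _ _).trans_eq (Finset.sum_congr rfl fun i hi => ?_)
        rw [abs_mul, abs_of_nonneg (hw i hi)]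
    _ ≤ ∑ i ∈ s, w i * M :=
        Finset.sum_le_sum fun i hi => mul_le_mul_of_nonneg_left (hf i hi) (hw i hi)
    _ = M * ∑ i ∈ s, w i := by rw [Finset.mul_sum]; simp only [mul_comm]

lemma eq_ite_add_max_sub {a t : ℝ} (ha : 0 ≤ a) (hgap : a < t → a = 0) :
    a = (if t ≤ a then t else 0) + max (a - t) 0 := by
  split_ifs with h
  · rw [max_eq_left (sub_nonneg.mpr h)]
    ring
  · rw [hgap (not_le.mp h), zero_add, max_eq_right (by linarith [not_le.mp h])]

lemma abs_sub_eq_ite_add_abs_sub {a b t : ℝ} (ha : 0 ≤ a) (hb : 0 ≤ b)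
    (hgapa : a < t → a = 0) (hgapb : b < t → b = 0) :
    |a - b| = t * (if (t ≤ a ↔ t ≤ b) then 0 else 1) + |max (a - t) 0 - max (b - t) 0| := by
  by_cases hta : t ≤ a <;> by_cases htb : t ≤ b
  · simp [hta, htb]
  · have ht0 : ¬ t ≤ 0 := not_le.mpr (hb.trans_lt (not_le.mp htb))
    rw [hgapb (not_le.mp htb), max_eq_left (sub_nonneg.mpr hta), max_eq_right (by linarith)]
    simp [hta, ht0, abs_of_nonneg ha, abs_of_nonneg (sub_nonneg.mpr hta)]
  · have ht0 : ¬ t ≤ 0 := not_le.mpr (ha.trans_lt (not_le.mp hta))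
    rw [hgapa (not_le.mp hta), max_eq_left (sub_nonneg.mpr htb), max_eq_right (by linarith)]
    simp [htb, ht0, abs_of_nonpos (sub_nonpos.mpr htb), hb]
  · rw [hgapa (not_le.mp hta), hgapb (not_le.mp htb)]
    simp

lemma sq_max_add_sq_max_neg (p : ℝ) : max p 0 ^ 2 + max (-p) 0 ^ 2 = p ^ 2 := by
  rcases le_total p 0 with hp | hp
  · rw [max_eq_right hp, max_eq_left (neg_nonneg.mpr hp), neg_sq]
    ring
  · rw [max_eq_left hp, max_eq_right (neg_nonpos.mpr hp)]
    ring

lemma sq_max_sub_add_sq_max_neg_sub_le (p q : ℝ) :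
    (max p 0 - max q 0) ^ 2 + (max (-p) 0 - max (-q) 0) ^ 2 ≤ (p - q) ^ 2 := by
  rcases le_total p 0 with hp | hp <;> rcases le_total q 0 with hq | hq <;>
    simp only [max_eq_left, max_eq_right, hp, hq, neg_nonneg, neg_nonpos] <;> nlinarith

theorem exists_weighted_median {ι : Type*} (s : Finset ι) {m : ι → ℝ}
    (hm : ∀ i ∈ s, 0 ≤ m i) (u : ι → ℝ) :
    ∃ c : ℝ, ∑ i ∈ s.filter (fun i => c < u i), m i ≤ (∑ i ∈ s, m i) / 2 ∧
      ∑ i ∈ s.filter (fun i => u i < c), m i ≤ (∑ i ∈ s, m i) / 2 := by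
  rcases s.eq_empty_or_nonempty with rfl | hs
  · exact ⟨0, by simp, by simp⟩
  have hM : 0 ≤ ∑ i ∈ s, m i := Finset.sum_nonneg hm
  have hsub (p : ι → Prop) [DecidablePred p] : ∑ i ∈ s.filter p, m i ≤ ∑ i ∈ s, m i :=
    Finset.sum_le_sum_of_subset_of_nonneg (Finset.filter_subset _ _) fun i hi _ => hm i hi
  -- the largest value `c` of `u` such that the mass strictly below `c` is at most half
  set C := (s.image u).filter fun t => ∑ i ∈ s.filter (fun i => u i < t), m i ≤ (∑ i ∈ s, m i) / 2
  have hC : C.Nonempty := by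
    refine ⟨(s.image u).min' (hs.image u), Finset.mem_filter.mpr ⟨Finset.min'_mem _ _, ?_⟩⟩
    rw [Finset.filter_false_of_mem fun i hi => not_lt.mpr
      (Finset.min'_le _ _ (Finset.mem_image_of_mem u hi)), Finset.sum_empty]
    linarith
  set c := C.max' hC
  have hcC : c ∈ C := C.max'_mem hC
  refine ⟨c, ?_, (Finset.mem_filter.mp hcC).2⟩
  by_contra! hgt
  have hne : (s.filter fun i => c < u i).Nonempty :=
    Finset.nonempty_iff_ne_empty.mpr fun h => by rw [h, Finset.sum_empty] at hgt; linarith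
  set c' := ((s.filter fun i => c < u i).image u).min' (hne.image u)
  obtain ⟨j, hj, hjc'⟩ := Finset.mem_image.mp (Finset.min'_mem _ (hne.image u))
  have hc'j : c' = u j := hjc'.symm
  have hcc' : c < c' := hc'j ▸ (Finset.mem_filter.mp hj).2
  have hc'C : c' ∉ C := fun h => (C.le_max' c' h).not_gt hcc'
  have hbelow : (∑ i ∈ s, m i) / 2 < ∑ i ∈ s.filter (fun i => u i < c'), m i := by
    by_contra! hle
    exact hc'C (Finset.mem_filter.mpr
      ⟨hc'j ▸ Finset.mem_image_of_mem u (Finset.mem_filter.mp hj).1, hle⟩)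
  have hdisj : Disjoint (s.filter fun i => u i < c') (s.filter fun i => c < u i) :=
    Finset.disjoint_filter.mpr fun i hi hlt hgt' =>
      hlt.not_ge (Finset.min'_le _ _ (Finset.mem_image_of_mem u (Finset.mem_filter.mpr ⟨hi, hgt'⟩)))
  have hunion := Finset.sum_union (f := m) hdisj
  rw [← Finset.filter_or] at hunion
  linarith [hsub fun i => u i < c' ∨ c < u i]

noncomputable def escobarConst (h m k a : ℝ) : ℝ :=
  (2 * h * m - a * (k + m)) * a / (a ^ 2 + 2 * m)

lemma escobarConst_mul_le {h m k a b D : ℝ} (ha : 0 < a) (hk : 0 ≤ k) (hm : 0 ≤ m)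
    (hb : 0 ≤ b) (hD : 0 ≤ D)
    (hkey : m * (h * b) ^ 2 ≤ 2 * D * (D + (k + m) * b)) :
    escobarConst h m k a * b ≤ D := by
  have hQ : 0 < a ^ 2 + 2 * m := by positivity
  suffices 2 * a * (m * (h * b)) ≤ (a ^ 2 + 2 * m) * D + a ^ 2 * (k + m) * b by
    rw [escobarConst, div_mul_eq_mul_div, div_le_iff₀ hQ]
    linarith
  rcases hD.eq_or_lt with rfl | hDpos
  · have hmhb : m * (h * b) = 0 := by
      rcases mul_eq_zero.mp (le_antisymm (by simpa using hkey) (by positivity) :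
        m * (h * b) ^ 2 = 0) with h0 | h0
      · rw [h0, zero_mul]
      · rw [pow_eq_zero_iff two_ne_zero |>.mp h0, mul_zero]
    rw [hmhb, mul_zero, mul_zero, zero_add]
    positivity
  · -- AM-GM: `4 a m (h b) D ≤ 4 m D² + a² m (h b)²`
    have hamgm := mul_nonneg hm (sq_nonneg (2 * D - a * (h * b)))
    refine le_of_mul_le_mul_left ?_ (by positivity : 0 < 2 * D)
    nlinarith [mul_le_mul_of_nonneg_left hkey (sq_nonneg a)]

section Graph

variable {μ : V → V → ℝ} {Ω : Finset V}

lemma mem_bdry {x : V} : x ∈ bdry μ Ω ↔ x ∉ Ω ∧ ∃ y ∈ Ω, 0 < μ x y := by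
  simp [bdry]

lemma disjoint_bdry : Disjoint Ω (bdry μ Ω) :=
  Finset.disjoint_right.mpr fun _ hx => (mem_bdry.mp hx).1

lemma vm_nonneg (hnn : ∀ x y, 0 ≤ μ x y) (x : V) : 0 ≤ vm μ Ω x := by
  unfold vm
  split <;> exact Finset.sum_nonneg fun y _ => hnn _ _

lemma vm_pos_of_mem_bdry (hnn : ∀ x y, 0 ≤ μ x y) {x : V} (hx : x ∈ bdry μ Ω) :
    0 < vm μ Ω x := by
  obtain ⟨hxΩ, y, hy, hμ⟩ := mem_bdry.mp hx
  rw [vm, if_neg hxΩ]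
  exact Finset.sum_pos' (fun z _ => hnn _ _) ⟨y, hy, hμ⟩

lemma msum_nonneg (hnn : ∀ x y, 0 ≤ μ x y) (B : Finset V) : 0 ≤ msum μ Ω B :=
  Finset.sum_nonneg fun x _ => vm_nonneg hnn x

lemma sum_sq_mul_vm_nonneg (hnn : ∀ x y, 0 ≤ μ x y) (f : V → ℝ) (B : Finset V) :
    0 ≤ ∑ x ∈ B, f x ^ 2 * vm μ Ω x :=
  Finset.sum_nonneg fun x _ => mul_nonneg (sq_nonneg _) (vm_nonneg hnn x)

lemma eq_zero_of_notMem_clos (hsym : ∀ x y, μ x y = μ y x) (hnn : ∀ x y, 0 ≤ μ x y)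
    {x y : V} (hx : x ∈ Ω) (hy : y ∉ clos μ Ω) : μ x y = 0 := by
  by_contra hne
  have hyΩ : y ∉ Ω := fun h => hy (Finset.mem_union_left _ h)
  have hpos : 0 < μ y x := hsym x y ▸ (hnn x y).lt_of_ne' hne
  exact hy (Finset.mem_union_right _ (mem_bdry.mpr ⟨hyΩ, x, hx, hpos⟩))

lemma sum_univ_eq_sum_clos (hsym : ∀ x y, μ x y = μ y x) (hnn : ∀ x y, 0 ≤ μ x y)
    {x : V} (hx : x ∈ Ω) (f : V → ℝ) :
    ∑ y, μ x y * f y = ∑ y ∈ clos μ Ω, μ x y * f y :=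
  (Finset.sum_subset (Finset.subset_univ _) fun y _ hy => by
    rw [eq_zero_of_notMem_clos hsym hnn hx hy, zero_mul]).symm

lemma vm_eq_sum_clos (hsym : ∀ x y, μ x y = μ y x) (hnn : ∀ x y, 0 ≤ μ x y)
    {x : V} (hx : x ∈ Ω) : vm μ Ω x = ∑ y ∈ clos μ Ω, μ x y := by
  simpa [vm, hx] using sum_univ_eq_sum_clos hsym hnn hx 1

lemma edgeSum_congr {F G : V → V → ℝ} (h : ∀ x ∈ Ω, ∀ y ∈ clos μ Ω, F x y = G x y) :
    edgeSum μ Ω F = edgeSum μ Ω G := by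
  have key (t : Finset V) (ht : t ⊆ clos μ Ω) :
      ∑ x ∈ Ω, ∑ y ∈ t, μ x y * F x y = ∑ x ∈ Ω, ∑ y ∈ t, μ x y * G x y :=
    Finset.sum_congr rfl fun x hx => Finset.sum_congr rfl fun y hy => by rw [h x hx y (ht hy)]
  rw [edgeSum, edgeSum, key Ω Finset.subset_union_left, key _ Finset.subset_union_right]

lemma edgeSum_mono (hnn : ∀ x y, 0 ≤ μ x y) {F G : V → V → ℝ}
    (h : ∀ x ∈ Ω, ∀ y ∈ clos μ Ω, F x y ≤ G x y) : edgeSum μ Ω F ≤ edgeSum μ Ω G := by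
  have key (t : Finset V) (ht : t ⊆ clos μ Ω) :
      ∑ x ∈ Ω, ∑ y ∈ t, μ x y * F x y ≤ ∑ x ∈ Ω, ∑ y ∈ t, μ x y * G x y :=
    Finset.sum_le_sum fun x hx => Finset.sum_le_sum fun y hy =>
      mul_le_mul_of_nonneg_left (h x hx y (ht hy)) (hnn x y)
  have := key Ω Finset.subset_union_left
  have := key _ (Finset.subset_union_right (s₁ := Ω))
  rw [edgeSum, edgeSum]
  linarith

lemma edgeSum_nonneg (hnn : ∀ x y, 0 ≤ μ x y) {F : V → V → ℝ}
    (h : ∀ x ∈ Ω, ∀ y ∈ clos μ Ω, 0 ≤ F x y) : 0 ≤ edgeSum μ Ω F := by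
  simpa [edgeSum] using edgeSum_mono (Ω := Ω) hnn h

lemma edgeSum_add (F G : V → V → ℝ) :
    edgeSum μ Ω (fun x y => F x y + G x y) = edgeSum μ Ω F + edgeSum μ Ω G := by
  simp only [edgeSum, mul_add, Finset.sum_add_distrib]
  ring

lemma edgeSum_const_mul (c : ℝ) (F : V → V → ℝ) :
    edgeSum μ Ω (fun x y => c * F x y) = c * edgeSum μ Ω F := by
  simp only [edgeSum, mul_left_comm _ c, ← Finset.mul_sum]
  ring

lemma edgeSum_add_swap (hsym : ∀ x y, μ x y = μ y x) (F : V → V → ℝ) :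
    edgeSum μ Ω (fun x y => F x y + F y x) =
      ∑ x ∈ Ω, ∑ y ∈ clos μ Ω, μ x y * F x y + ∑ z ∈ bdry μ Ω, ∑ x ∈ Ω, μ z x * F z x := by
  have hswap (s t : Finset V) : ∑ x ∈ s, ∑ y ∈ t, μ x y * F y x =
      ∑ y ∈ t, ∑ x ∈ s, μ y x * F y x := by
    rw [Finset.sum_comm]
    simp only [hsym]
  simp only [edgeSum, mul_add, Finset.sum_add_distrib, hswap, clos,
    Finset.sum_union disjoint_bdry]
  ring

lemma edgeSum_add_eq_sum_vm (hsym : ∀ x y, μ x y = μ y x) (hnn : ∀ x y, 0 ≤ μ x y)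
    (g : V → ℝ) :
    edgeSum μ Ω (fun x y => g x + g y) =
      ∑ x ∈ Ω, g x * vm μ Ω x + ∑ x ∈ bdry μ Ω, g x * vm μ Ω x := by
  rw [edgeSum_add_swap hsym (fun x _ => g x)]
  congr 1
  · refine Finset.sum_congr rfl fun x hx => ?_
    rw [vm_eq_sum_clos hsym hnn hx, Finset.mul_sum]
    simp only [mul_comm]
  · refine Finset.sum_congr rfl fun z hz => ?_
    rw [vm, if_neg (mem_bdry.mp hz).1, Finset.mul_sum]
    simp only [mul_comm]

lemma dform_eq_sum (hsym : ∀ x y, μ x y = μ y x) (f g : V → ℝ) :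
    dform μ Ω f g =
      ∑ x ∈ Ω, g x * ∑ y ∈ clos μ Ω, μ x y * (f x - f y) +
        ∑ z ∈ bdry μ Ω, g z * ∑ x ∈ Ω, μ z x * (f z - f x) := by
  have h := edgeSum_add_swap (Ω := Ω) hsym fun x y => g x * (f x - f y)
  simp only [Finset.mul_sum, mul_left_comm (g _)]
  rw [← h, dform]
  exact edgeSum_congr fun x _ y _ => by ring

lemma dirichlet_eq_dform (f : V → ℝ) : dirichlet μ Ω f = dform μ Ω f f :=
  edgeSum_congr fun x _ y _ => by ring

lemma dirichlet_add_const_mul (f g : V → ℝ) (s : ℝ) :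
    dirichlet μ Ω (fun x => f x + s * g x) =
      dirichlet μ Ω f + 2 * s * dform μ Ω f g + s ^ 2 * dirichlet μ Ω g := by
  simp only [dirichlet, dform, ← edgeSum_const_mul, ← edgeSum_add]
  exact edgeSum_congr fun x _ y _ => by ring

lemma sq_edgeSum_mul_le (hnn : ∀ x y, 0 ≤ μ x y) (F G : V → V → ℝ) :
    (edgeSum μ Ω fun x y => F x y * G x y) ^ 2 ≤
      (edgeSum μ Ω fun x y => F x y ^ 2) * edgeSum μ Ω fun x y => G x y ^ 2 := by
  have h : discrim (edgeSum μ Ω fun x y => G x y ^ 2)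
      (2 * edgeSum μ Ω fun x y => F x y * G x y) (edgeSum μ Ω fun x y => F x y ^ 2) ≤ 0 :=
    discrim_le_zero fun s => calc
      0 ≤ edgeSum μ Ω fun x y => (s * s) * G x y ^ 2 + s * (2 * (F x y * G x y)) + F x y ^ 2 :=
        edgeSum_nonneg hnn fun x _ y _ => by nlinarith [sq_nonneg (F x y + s * G x y)]
      _ = _ := by
        rw [edgeSum_add, edgeSum_add, edgeSum_const_mul, edgeSum_const_mul, edgeSum_const_mul]
        ring
  rw [discrim] at h
  linarith

lemma dirichlet_nonneg (hnn : ∀ x y, 0 ≤ μ x y) (f : V → ℝ) : 0 ≤ dirichlet μ Ω f :=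
  edgeSum_nonneg hnn fun _ _ _ _ => sq_nonneg _

lemma cut_nonneg (hnn : ∀ x y, 0 ≤ μ x y) (A : Finset V) : 0 ≤ cut μ Ω A :=
  edgeSum_nonneg hnn fun _ _ _ _ => by split <;> norm_num

lemma IsHarmonic.const_mul {u : V → ℝ} (hu : IsHarmonic μ Ω u) (c : ℝ) :
    IsHarmonic μ Ω fun x => c * u x := fun x hx => by
  have h := hu x hx
  simp only [lap, ← mul_sub, mul_left_comm (μ x _) c, ← Finset.mul_sum, mul_div_assoc] at h ⊢
  rw [h, mul_zero]

lemma dform_single (hsym : ∀ x y, μ x y = μ y x) {x : V} (hx : x ∈ Ω) (f : V → ℝ) :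
    dform μ Ω f (Pi.single x 1) = ∑ y ∈ (clos μ Ω).erase x, μ x y * (f x - f y) := by
  have hbdry : ∑ z ∈ bdry μ Ω, (Pi.single x 1 : V → ℝ) z * ∑ y ∈ Ω, μ z y * (f z - f y) = 0 :=
    Finset.sum_eq_zero fun z hz => by
      rw [Pi.single_eq_of_ne (fun h => (mem_bdry.mp hz).1 (by rwa [h])), zero_mul]
  rw [dform_eq_sum hsym, hbdry, add_zero,
    Finset.sum_eq_single_of_mem x hx fun z _ hzx => by rw [Pi.single_eq_of_ne hzx, zero_mul],
    Pi.single_eq_same, one_mul, Finset.sum_erase]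
  rw [sub_self, mul_zero]

lemma dirichlet_update (hsym : ∀ x y, μ x y = μ y x) {x : V} (hx : x ∈ Ω) (u : V → ℝ) (t : ℝ) :
    dirichlet μ Ω (Function.update u x t) =
      dirichlet μ Ω u + 2 * (t - u x) * ∑ y ∈ (clos μ Ω).erase x, μ x y * (u x - u y) +
        (t - u x) ^ 2 * ∑ y ∈ (clos μ Ω).erase x, μ x y := by
  have hupd : Function.update u x t = fun y => u y + (t - u x) * (Pi.single x 1 : V → ℝ) y := by
    ext y
    rcases eq_or_ne y x with rfl | hyx
    · simp
    · simp [hyx]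
  have hsingle : ∑ y ∈ (clos μ Ω).erase x,
      μ x y * ((Pi.single x 1 : V → ℝ) x - (Pi.single x 1 : V → ℝ) y) =
        ∑ y ∈ (clos μ Ω).erase x, μ x y :=
    Finset.sum_congr rfl fun y hy => by
      rw [Pi.single_eq_same, Pi.single_eq_of_ne (Finset.ne_of_mem_erase hy), sub_zero, mul_one]
  rw [hupd, dirichlet_add_const_mul, dirichlet_eq_dform (Pi.single x 1), dform_single hsym hx,
    dform_single hsym hx, hsingle]

lemma lap_eq_zero_of_dirichlet_le_update (hsym : ∀ x y, μ x y = μ y x)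
    (hnn : ∀ x y, 0 ≤ μ x y) {x : V} (hx : x ∈ Ω) {u : V → ℝ}
    (hmin : dirichlet μ Ω u ≤ dirichlet μ Ω (Function.update u x
      ((∑ y ∈ (clos μ Ω).erase x, μ x y * u y) / ∑ y ∈ (clos μ Ω).erase x, μ x y))) :
    lap μ Ω u x = 0 := by
  set A := ∑ y ∈ (clos μ Ω).erase x, μ x y
  set S := ∑ y ∈ (clos μ Ω).erase x, μ x y * (u x - u y)
  have hsum : ∑ y ∈ (clos μ Ω).erase x, μ x y * u y = A * u x - S := by
    simp only [S, A, mul_sub, Finset.sum_sub_distrib, Finset.sum_mul]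
    ring
  have hlap : lap μ Ω u x = -S / vm μ Ω x := by
    rw [lap, sum_univ_eq_sum_clos hsym hnn hx fun y => u y - u x,
      ← Finset.sum_erase _ (by rw [sub_self, mul_zero]), ← Finset.sum_neg_distrib]
    simp only [← mul_neg, neg_sub]
  suffices S = 0 by rw [hlap, this, neg_zero, zero_div]
  rcases (Finset.sum_nonneg fun y _ => hnn x y : 0 ≤ A).eq_or_lt with hA | hA
  · have hzero := (Finset.sum_eq_zero_iff_of_nonneg fun y _ => hnn x y).mp hA.symm
    exact Finset.sum_eq_zero fun y hy => by rw [hzero y hy, zero_mul]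
  · -- moving `u x` to the weighted average of its neighbours changes the energy by `-S² / A`
    rw [dirichlet_update hsym hx, hsum] at hmin
    change _ ≤ _ + 2 * _ * S + _ * A at hmin
    have hA0 : A ≠ 0 := hA.ne'
    have hdrop : 2 * ((A * u x - S) / A - u x) * S + ((A * u x - S) / A - u x) ^ 2 * A =
        -(S ^ 2 / A) := by
      field_simp
      ring
    have hS : S ^ 2 / A ≤ 0 := by linarith
    have hS2 : S ^ 2 ≤ 0 := by simpa using (div_le_iff₀ hA).mp hS
    exact pow_eq_zero_iff two_ne_zero |>.mp (le_antisymm hS2 (sq_nonneg S))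

theorem exists_isHarmonic_eq_on_compl (hsym : ∀ x y, μ x y = μ y x) (hnn : ∀ x y, 0 ≤ μ x y)
    (ψ : V → ℝ) : ∃ u : V → ℝ, IsHarmonic μ Ω u ∧ ∀ z ∉ Ω, u z = ψ z := by
  -- Dirichlet principle: minimise the energy over a box containing the data; moving one interior
  -- value to the average of its neighbours stays in the box, so the minimiser is harmonic.
  set M := ∑ z, |ψ z|
  have hψ (z : V) : |ψ z| ≤ M :=
    Finset.single_le_sum (fun z _ => abs_nonneg (ψ z)) (Finset.mem_univ z)
  set K : Set (V → ℝ) := Set.univ.pi fun z => if z ∈ Ω then Set.Icc (-M) M else {ψ z}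
  have hK : IsCompact K := isCompact_univ_pi fun z => by
    split
    · exact isCompact_Icc
    · exact isCompact_singleton
  have hψK : ψ ∈ K := fun z _ => by
    dsimp only
    split
    · exact abs_le.mp (hψ z)
    · rfl
  have hcont : Continuous (dirichlet μ Ω) := by
    unfold dirichlet edgeSum
    fun_prop
  obtain ⟨u, huK, hmin⟩ := hK.exists_isMinOn ⟨ψ, hψK⟩ hcont.continuousOn
  have hu_off (z : V) (hz : z ∉ Ω) : u z = ψ z := by
    simpa [hz] using huK z (Set.mem_univ z)
  have hu_le (z : V) : |u z| ≤ M := by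
    by_cases hz : z ∈ Ω
    · simpa [hz, abs_le] using huK z (Set.mem_univ z)
    · rw [hu_off z hz]
      exact hψ z
  refine ⟨u, fun x hx => lap_eq_zero_of_dirichlet_le_update hsym hnn hx (hmin ?_), hu_off⟩
  intro z _
  rcases eq_or_ne z x with rfl | hzx
  · dsimp only
    rw [Function.update_self, if_pos hx]
    exact abs_le.mp (abs_sum_mul_div_sum_le _ (fun y _ => hnn z y)
      ((abs_nonneg _).trans (hu_le z)) fun y _ => hu_le y)
  · rw [Function.update_of_ne hzx]
    exact huK z (Set.mem_univ z)

theorem exists_isHarmonic_normalized (hsym : ∀ x y, μ x y = μ y x) (hnn : ∀ x y, 0 ≤ μ x y)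
    (hcard : 2 ≤ (bdry μ Ω).card) :
    ∃ u : V → ℝ, IsHarmonic μ Ω u ∧ ∑ x ∈ bdry μ Ω, u x ^ 2 * vm μ Ω x = 1 ∧
      ∑ x ∈ bdry μ Ω, u x * vm μ Ω x = 0 := by
  obtain ⟨p, hp, q, hq, hpq⟩ := Finset.one_lt_card.mp hcard
  have hmp := vm_pos_of_mem_bdry (Ω := Ω) hnn hp
  have hmq := vm_pos_of_mem_bdry (Ω := Ω) hnn hq
  obtain ⟨u, hu, hu_off⟩ := exists_isHarmonic_eq_on_compl (Ω := Ω) hsym hnn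
    (Pi.single p (vm μ Ω q) - Pi.single q (vm μ Ω p))
  have hsum (g : ℝ → ℝ) (hg : g 0 = 0) : ∑ x ∈ bdry μ Ω, g (u x) * vm μ Ω x =
      g (vm μ Ω q) * vm μ Ω p + g (-vm μ Ω p) * vm μ Ω q := by
    rw [← Finset.sum_subset (Finset.insert_subset hp (Finset.singleton_subset_iff.mpr hq)),
      Finset.sum_pair hpq]
    · simp [hu_off p (mem_bdry.mp hp).1, hu_off q (mem_bdry.mp hq).1, hpq, hpq.symm]
    · intro z hz hzpq
      simp only [Finset.mem_insert, Finset.mem_singleton, not_or] at hzpq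
      simp [hu_off z (mem_bdry.mp hz).1, hzpq.1, hzpq.2, hg]
  have hsq : ∑ x ∈ bdry μ Ω, u x ^ 2 * vm μ Ω x =
      vm μ Ω q ^ 2 * vm μ Ω p + vm μ Ω p ^ 2 * vm μ Ω q := by
    rw [hsum (· ^ 2) (by norm_num), neg_sq]
  have hlin : ∑ x ∈ bdry μ Ω, u x * vm μ Ω x = 0 := by
    have h := hsum id rfl
    simp only [id] at h
    rw [h]
    ring
  set N := vm μ Ω q ^ 2 * vm μ Ω p + vm μ Ω p ^ 2 * vm μ Ω q
  have hN : 0 < N := by positivity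
  refine ⟨fun x => (Real.sqrt N)⁻¹ * u x, hu.const_mul _, ?_, ?_⟩
  · simp only [mul_pow, inv_pow, Real.sq_sqrt hN.le, mul_assoc, ← Finset.mul_sum, hsq]
    exact inv_mul_cancel₀ hN.ne'
  · simp only [mul_assoc, ← Finset.mul_sum, hlin, mul_zero]

noncomputable def superlevel (μ : V → V → ℝ) (Ω : Finset V) (w : V → ℝ) (t : ℝ) : Finset V :=
  (clos μ Ω).filter fun x => t ≤ w x

lemma sum_bdry_eq_layer {w : V → ℝ} {t : ℝ} (hw : ∀ x, 0 ≤ w x)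
    (hgap : ∀ x ∈ clos μ Ω, w x < t → w x = 0) :
    ∑ x ∈ bdry μ Ω, w x * vm μ Ω x =
      t * msum μ Ω (superlevel μ Ω w t ∩ bdry μ Ω) +
        ∑ x ∈ bdry μ Ω, max (w x - t) 0 * vm μ Ω x := by
  have hinter : superlevel μ Ω w t ∩ bdry μ Ω = (bdry μ Ω).filter fun x => t ≤ w x := by
    ext x
    simp only [superlevel, Finset.mem_inter, Finset.mem_filter]
    exact ⟨fun h => ⟨h.2, h.1.2⟩, fun h => ⟨⟨Finset.mem_union_right _ h.1, h.2⟩, h.1⟩⟩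
  rw [hinter, msum, Finset.sum_filter, Finset.mul_sum, ← Finset.sum_add_distrib]
  refine Finset.sum_congr rfl fun x hx => ?_
  conv_lhs => rw [eq_ite_add_max_sub (hw x) (hgap x (Finset.mem_union_right _ hx))]
  split_ifs <;> ring

lemma edgeSum_abs_eq_layer {w : V → ℝ} {t : ℝ} (hw : ∀ x, 0 ≤ w x)
    (hgap : ∀ x ∈ clos μ Ω, w x < t → w x = 0) :
    (edgeSum μ Ω fun x y => |w x - w y|) =
      t * cut μ Ω (superlevel μ Ω w t) +
        edgeSum μ Ω fun x y => |max (w x - t) 0 - max (w y - t) 0| := by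
  rw [cut, ← edgeSum_const_mul, ← edgeSum_add]
  refine edgeSum_congr fun x hx y hy => ?_
  have hxc : x ∈ clos μ Ω := Finset.mem_union_left _ hx
  simp only [superlevel, Finset.mem_filter, hxc, hy, true_and]
  exact abs_sub_eq_ite_add_abs_sub (hw x) (hw y) (hgap x hxc) (hgap y hy)

theorem mul_sum_bdry_le_edgeSum_abs (h : ℝ) {w : V → ℝ} (hw : ∀ x, 0 ≤ w x)
    (hcut : ∀ t > 0, h * msum μ Ω (superlevel μ Ω w t ∩ bdry μ Ω) ≤
      cut μ Ω (superlevel μ Ω w t)) :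
    h * ∑ x ∈ bdry μ Ω, w x * vm μ Ω x ≤ edgeSum μ Ω fun x y => |w x - w y| := by
  suffices ∀ n : ℕ, ∀ w : V → ℝ, (∀ x, 0 ≤ w x) →
      (∀ t > 0, h * msum μ Ω (superlevel μ Ω w t ∩ bdry μ Ω) ≤ cut μ Ω (superlevel μ Ω w t)) →
      (((clos μ Ω).filter fun x => 0 < w x).image w).card ≤ n →
      h * ∑ x ∈ bdry μ Ω, w x * vm μ Ω x ≤ edgeSum μ Ω fun x y => |w x - w y| from
    this _ w hw hcut le_rfl
  intro n
  induction n with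
  | zero =>
    intro w hw _ hcard
    have hempty := Finset.card_eq_zero.mp (Nat.le_zero.mp hcard)
    have hzero : ∀ x ∈ clos μ Ω, w x = 0 := fun x hx =>
      ((hw x).eq_or_lt.resolve_right fun hpos => by
        simpa [hempty] using Finset.mem_image_of_mem w
          (Finset.mem_filter.mpr ⟨hx, hpos⟩ : x ∈ (clos μ Ω).filter fun x => 0 < w x)).symm
    refine le_of_eq ?_
    calc h * ∑ x ∈ bdry μ Ω, w x * vm μ Ω x = edgeSum μ Ω fun _ _ => 0 := by
          rw [Finset.sum_eq_zero fun x hx => by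
            rw [hzero x (Finset.mem_union_right _ hx), zero_mul]]
          simp [edgeSum]
      _ = edgeSum μ Ω fun x y => |w x - w y| := edgeSum_congr fun x hx y hy => by
          rw [hzero x (Finset.mem_union_left _ hx), hzero y hy, sub_zero, abs_zero]
  | succ n ih =>
    intro w hw hcut hcard
    set P := ((clos μ Ω).filter fun x => 0 < w x).image w
    rcases P.eq_empty_or_nonempty with hP | hP
    · exact ih w hw hcut (by change P.card ≤ n; rw [hP, Finset.card_empty]; exact Nat.zero_le n)
    -- peel off the bottom layer `t • 𝟙{t ≤ w}`, `t` the least positive value of `w`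
    set t := P.min' hP
    have htP : t ∈ P := P.min'_mem hP
    have ht : 0 < t := by
      obtain ⟨x, hx, hxt⟩ := Finset.mem_image.mp htP
      exact hxt ▸ (Finset.mem_filter.mp hx).2
    have hgap : ∀ x ∈ clos μ Ω, w x < t → w x = 0 := fun x hx hlt =>
      ((hw x).eq_or_lt.resolve_right fun hpos => hlt.not_ge <|
        P.min'_le _ (Finset.mem_image_of_mem w (Finset.mem_filter.mpr ⟨hx, hpos⟩))).symm
    set w' : V → ℝ := fun x => max (w x - t) 0
    have hsuper (s : ℝ) (hs : 0 < s) : superlevel μ Ω w' s = superlevel μ Ω w (s + t) :=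
      Finset.filter_congr fun x _ => by
        simp only [w', le_max_iff, not_le.mpr hs, or_false]
        constructor <;> intro <;> linarith
    have hcut' : ∀ s > 0, h * msum μ Ω (superlevel μ Ω w' s ∩ bdry μ Ω) ≤
        cut μ Ω (superlevel μ Ω w' s) := fun s hs => by
      rw [hsuper s hs]
      exact hcut _ (by linarith)
    have hcard' : (((clos μ Ω).filter fun x => 0 < w' x).image w').card ≤ n := by
      have hsub : ((clos μ Ω).filter fun x => 0 < w' x).image w' ⊆
          (P.erase t).image (· - t) := by
        intro r hr
        obtain ⟨x, hx, rfl⟩ := Finset.mem_image.mp hr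
        obtain ⟨hxc, hpos⟩ := Finset.mem_filter.mp hx
        have hlt : t < w x := by
          by_contra hle
          exact hpos.ne' (max_eq_right (by linarith [not_lt.mp hle]))
        refine Finset.mem_image.mpr ⟨w x, Finset.mem_erase.mpr ⟨hlt.ne', ?_⟩, ?_⟩
        · exact Finset.mem_image_of_mem w (Finset.mem_filter.mpr ⟨hxc, ht.trans hlt⟩)
        · exact (max_eq_left (by linarith)).symm
      calc _ ≤ ((P.erase t).image (· - t)).card := Finset.card_le_card hsub
        _ ≤ (P.erase t).card := Finset.card_image_le
        _ ≤ n := by rw [Finset.card_erase_of_mem htP]; omega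
    calc h * ∑ x ∈ bdry μ Ω, w x * vm μ Ω x
        = t * (h * msum μ Ω (superlevel μ Ω w t ∩ bdry μ Ω)) +
            h * ∑ x ∈ bdry μ Ω, w' x * vm μ Ω x := by
          rw [sum_bdry_eq_layer hw hgap]
          ring
      _ ≤ t * cut μ Ω (superlevel μ Ω w t) + edgeSum μ Ω fun x y => |w' x - w' y| :=
          add_le_add (mul_le_mul_of_nonneg_left (hcut t ht) ht.le)
            (ih w' (fun x => le_max_right _ _) hcut' hcard')
      _ = _ := (edgeSum_abs_eq_layer hw hgap).symm

lemma hE_nonneg (hnn : ∀ x y, 0 ≤ μ x y) : 0 ≤ hE μ Ω :=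
  Real.sInf_nonneg fun _ ⟨A, _, hA, _, hr⟩ => hr ▸ div_nonneg (cut_nonneg hnn A) hA.le

lemma robin_quotient_nonneg (hnn : ∀ x y, 0 ≤ μ x y) {k : ℝ} (hk : 0 ≤ k) (φ : V → ℝ) :
    0 ≤ (dirichlet μ Ω φ + k * ∑ x ∈ bdry μ Ω, φ x ^ 2 * vm μ Ω x) /
      ∑ x ∈ Ω, φ x ^ 2 * vm μ Ω x :=
  div_nonneg (add_nonneg (dirichlet_nonneg hnn φ)
    (mul_nonneg hk (sum_sq_mul_vm_nonneg hnn φ _))) (sum_sq_mul_vm_nonneg hnn φ _)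

lemma mu1_nonneg (hnn : ∀ x y, 0 ≤ μ x y) {k : ℝ} (hk : 0 ≤ k) : 0 ≤ mu1 μ Ω k :=
  Real.sInf_nonneg fun _ ⟨φ, _, hr⟩ => hr ▸ robin_quotient_nonneg hnn hk φ

lemma hE_mul_le_cut (hnn : ∀ x y, 0 ≤ μ x y) {A : Finset V} (hA : A ⊆ clos μ Ω)
    (hhalf : msum μ Ω (A ∩ bdry μ Ω) ≤ msum μ Ω (bdry μ Ω) / 2) :
    hE μ Ω * msum μ Ω (A ∩ bdry μ Ω) ≤ cut μ Ω A := by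
  rcases (msum_nonneg hnn (A ∩ bdry μ Ω)).eq_or_lt with h0 | hpos
  · rw [← h0, mul_zero]
    exact cut_nonneg hnn A
  · have hbdd : BddBelow {r : ℝ | ∃ A : Finset V, A ⊆ clos μ Ω ∧
        0 < msum μ Ω (A ∩ bdry μ Ω) ∧ msum μ Ω (A ∩ bdry μ Ω) ≤ msum μ Ω (bdry μ Ω) / 2 ∧
        r = cut μ Ω A / msum μ Ω (A ∩ bdry μ Ω)} :=
      ⟨0, fun _ ⟨A, _, hA, _, hr⟩ => hr ▸ div_nonneg (cut_nonneg hnn A) hA.le⟩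
    exact (le_div_iff₀ hpos).mp (csInf_le hbdd ⟨A, hA, hpos, hhalf, rfl⟩)

lemma mu1_mul_le (hnn : ∀ x y, 0 ≤ μ x y) {k : ℝ} (hk : 0 ≤ k) (φ : V → ℝ) :
    mu1 μ Ω k * ∑ x ∈ Ω, φ x ^ 2 * vm μ Ω x ≤
      dirichlet μ Ω φ + k * ∑ x ∈ bdry μ Ω, φ x ^ 2 * vm μ Ω x := by
  rcases (sum_sq_mul_vm_nonneg hnn φ Ω).eq_or_lt with h0 | hpos
  · rw [← h0, mul_zero]
    exact add_nonneg (dirichlet_nonneg hnn φ) (mul_nonneg hk (sum_sq_mul_vm_nonneg hnn φ _))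
  · have hbdd : BddBelow {r : ℝ | ∃ φ : V → ℝ, 0 < ∑ x ∈ Ω, φ x ^ 2 * vm μ Ω x ∧
        r = (dirichlet μ Ω φ + k * ∑ x ∈ bdry μ Ω, φ x ^ 2 * vm μ Ω x) /
          ∑ x ∈ Ω, φ x ^ 2 * vm μ Ω x} :=
      ⟨0, fun _ ⟨φ, _, hr⟩ => hr ▸ robin_quotient_nonneg hnn hk φ⟩
    exact (le_div_iff₀ hpos).mp (csInf_le hbdd ⟨φ, hpos, rfl⟩)

theorem hE_mul_sum_bdry_le (hnn : ∀ x y, 0 ≤ μ x y) {w : V → ℝ} (hw : ∀ x, 0 ≤ w x)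
    (hsupp : msum μ Ω ((bdry μ Ω).filter fun x => 0 < w x) ≤ msum μ Ω (bdry μ Ω) / 2) :
    hE μ Ω * ∑ x ∈ bdry μ Ω, w x * vm μ Ω x ≤ edgeSum μ Ω fun x y => |w x - w y| := by
  refine mul_sum_bdry_le_edgeSum_abs _ hw fun t ht => hE_mul_le_cut hnn (Finset.filter_subset _ _)
    (le_trans (Finset.sum_le_sum_of_subset_of_nonneg ?_ fun x _ _ => vm_nonneg hnn x) hsupp)
  intro x hx
  obtain ⟨hxt, hxb⟩ := Finset.mem_inter.mp hx
  exact Finset.mem_filter.mpr ⟨hxb, ht.trans_le (Finset.mem_filter.mp hxt).2⟩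

theorem escobarConst_mul_sum_bdry_le_dirichlet (hsym : ∀ x y, μ x y = μ y x)
    (hnn : ∀ x y, 0 ≤ μ x y) {a k : ℝ} (ha : 0 < a) (hk : 0 ≤ k) {v : V → ℝ}
    (hv : ∀ x, 0 ≤ v x)
    (hsupp : msum μ Ω ((bdry μ Ω).filter fun x => 0 < v x) ≤ msum μ Ω (bdry μ Ω) / 2) :
    escobarConst (hE μ Ω) (mu1 μ Ω k) k a * ∑ x ∈ bdry μ Ω, v x ^ 2 * vm μ Ω x ≤
      dirichlet μ Ω v := by
  set b := ∑ x ∈ bdry μ Ω, v x ^ 2 * vm μ Ω x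
  set n := ∑ x ∈ Ω, v x ^ 2 * vm μ Ω x
  set E := edgeSum μ Ω fun x y => |v x ^ 2 - v y ^ 2|
  have hb : 0 ≤ b := sum_sq_mul_vm_nonneg hnn v _
  have hm : 0 ≤ mu1 μ Ω k := mu1_nonneg hnn hk
  have hhb : 0 ≤ hE μ Ω * b := mul_nonneg (hE_nonneg hnn) hb
  have hcoarea : hE μ Ω * b ≤ E := by
    refine hE_mul_sum_bdry_le hnn (fun x => sq_nonneg (v x)) (le_of_eq_of_le ?_ hsupp)
    exact congrArg _ (Finset.filter_congr fun x _ => sq_pos_iff.trans (hv x).lt_iff_ne'.symm)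
  have hcs : E ^ 2 ≤ dirichlet μ Ω v * edgeSum μ Ω fun x y => (v x + v y) ^ 2 := by
    have h := sq_edgeSum_mul_le (Ω := Ω) hnn (fun x y => |v x - v y|) fun x y => |v x + v y|
    simp only [sq_abs, ← abs_mul] at h
    rwa [show E = edgeSum μ Ω fun x y => |(v x - v y) * (v x + v y)| from
      edgeSum_congr fun x _ y _ => by ring_nf]
  have hsum : (edgeSum μ Ω fun x y => (v x + v y) ^ 2) ≤ 2 * n + 2 * b := by
    calc _ ≤ edgeSum μ Ω fun x y => 2 * v x ^ 2 + 2 * v y ^ 2 :=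
          edgeSum_mono hnn fun x _ y _ => by nlinarith [sq_nonneg (v x - v y)]
      _ = 2 * n + 2 * b := by
          rw [edgeSum_add_eq_sum_vm hsym hnn, Finset.mul_sum, Finset.mul_sum]
          simp only [mul_assoc]
  have hrobin : mu1 μ Ω k * n ≤ dirichlet μ Ω v + k * b := mu1_mul_le hnn hk v
  refine escobarConst_mul_le ha hk hm hb (dirichlet_nonneg hnn v) ?_
  calc mu1 μ Ω k * (hE μ Ω * b) ^ 2
      ≤ mu1 μ Ω k * (dirichlet μ Ω v * (2 * n + 2 * b)) := by
        gcongr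
        calc (hE μ Ω * b) ^ 2 ≤ E ^ 2 := pow_le_pow_left₀ hhb hcoarea 2
          _ ≤ _ := hcs
          _ ≤ _ := mul_le_mul_of_nonneg_left hsum (dirichlet_nonneg hnn v)
    _ = 2 * dirichlet μ Ω v * (mu1 μ Ω k * n + mu1 μ Ω k * b) := by ring
    _ ≤ 2 * dirichlet μ Ω v * (dirichlet μ Ω v + (k + mu1 μ Ω k) * b) :=
        mul_le_mul_of_nonneg_left (by linarith) (by linarith [dirichlet_nonneg (Ω := Ω) hnn v])

theorem escobarConst_le_dirichlet (hsym : ∀ x y, μ x y = μ y x) (hnn : ∀ x y, 0 ≤ μ x y)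
    {a k : ℝ} (ha : 0 < a) (hk : 0 ≤ k) {u : V → ℝ}
    (hnorm : ∑ x ∈ bdry μ Ω, u x ^ 2 * vm μ Ω x = 1)
    (hmean : ∑ x ∈ bdry μ Ω, u x * vm μ Ω x = 0) :
    escobarConst (hE μ Ω) (mu1 μ Ω k) k a ≤ dirichlet μ Ω u := by
  set C := escobarConst (hE μ Ω) (mu1 μ Ω k) k a
  rcases le_or_gt C 0 with hC | hC
  · exact hC.trans (dirichlet_nonneg hnn u)
  obtain ⟨c, habove, hbelow⟩ := exists_weighted_median (bdry μ Ω) (fun x _ => vm_nonneg hnn x) u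
  set wp : V → ℝ := fun x => max (u x - c) 0
  set wm : V → ℝ := fun x => max (-(u x - c)) 0
  have bp : C * ∑ x ∈ bdry μ Ω, wp x ^ 2 * vm μ Ω x ≤ dirichlet μ Ω wp :=
    escobarConst_mul_sum_bdry_le_dirichlet hsym hnn ha hk (fun x => le_max_right _ _) <| by
      simpa only [wp, msum, lt_max_iff, sub_pos, lt_irrefl, or_false] using habove
  have bm : C * ∑ x ∈ bdry μ Ω, wm x ^ 2 * vm μ Ω x ≤ dirichlet μ Ω wm :=
    escobarConst_mul_sum_bdry_le_dirichlet hsym hnn ha hk (fun x => le_max_right _ _) <| by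
      simpa only [wm, msum, lt_max_iff, neg_pos, sub_neg, lt_irrefl, or_false] using hbelow
  have hsplit : dirichlet μ Ω wp + dirichlet μ Ω wm ≤ dirichlet μ Ω u := by
    rw [dirichlet, dirichlet, ← edgeSum_add]
    exact edgeSum_mono hnn fun x _ y _ => by
      simpa only [sub_sub_sub_cancel_right] using
        sq_max_sub_add_sq_max_neg_sub_le (u x - c) (u y - c)
  have hmass : 1 ≤ ∑ x ∈ bdry μ Ω, wp x ^ 2 * vm μ Ω x + ∑ x ∈ bdry μ Ω, wm x ^ 2 * vm μ Ω x := by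
    have hexpand : ∑ x ∈ bdry μ Ω, wp x ^ 2 * vm μ Ω x + ∑ x ∈ bdry μ Ω, wm x ^ 2 * vm μ Ω x =
        1 + c ^ 2 * msum μ Ω (bdry μ Ω) := calc
      _ = ∑ x ∈ bdry μ Ω, (u x ^ 2 * vm μ Ω x - 2 * c * (u x * vm μ Ω x) + c ^ 2 * vm μ Ω x) := by
        rw [← Finset.sum_add_distrib]
        refine Finset.sum_congr rfl fun x _ => ?_
        rw [← add_mul, sq_max_add_sq_max_neg (u x - c)]
        ring
      _ = 1 + c ^ 2 * msum μ Ω (bdry μ Ω) := by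
        rw [Finset.sum_add_distrib, Finset.sum_sub_distrib, ← Finset.mul_sum, ← Finset.mul_sum,
          hnorm, hmean, msum]
        ring
    rw [hexpand]
    linarith [mul_nonneg (sq_nonneg c) (msum_nonneg (Ω := Ω) hnn (bdry μ Ω))]
  calc C ≤ C * (∑ x ∈ bdry μ Ω, wp x ^ 2 * vm μ Ω x + ∑ x ∈ bdry μ Ω, wm x ^ 2 * vm μ Ω x) :=
        le_mul_of_one_le_right hC.le hmass
    _ ≤ dirichlet μ Ω wp + dirichlet μ Ω wm := by
        rw [mul_add]
        exact add_le_add bp bm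
    _ ≤ dirichlet μ Ω u := hsplit

end Graph

theorem stmt_1_general (μ : V → V → ℝ) (Ω : Finset V)
    (hsym : ∀ x y, μ x y = μ y x) (hnn : ∀ x y, 0 ≤ μ x y)
    (hcard : 2 ≤ (bdry μ Ω).card) :
    ∀ a k : ℝ, 0 < a → 0 < k →
      lambda1 μ Ω ≥
        (2 * hE μ Ω * mu1 μ Ω k - a * (k + mu1 μ Ω k)) * a / (a ^ 2 + 2 * mu1 μ Ω k) := by
  intro a k ha hk
  obtain ⟨u₀, hu₀, hnorm₀, hmean₀⟩ := exists_isHarmonic_normalized hsym hnn hcard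
  exact le_csInf ⟨_, u₀, hu₀, hnorm₀, hmean₀, rfl⟩ fun r ⟨u, _, hnorm, hmean, hr⟩ =>
    hr ▸ escobarConst_le_dirichlet hsym hnn ha hk.le hnorm hmean

/-- Theorem 1.3 (Escobar-type Cheeger estimate):
λ₁(Ω) ≥ ((2 h_E(Ω̃) μ₁(k) − a(k + μ₁(k))) a)/(a² + 2 μ₁(k)) for all a, k > 0. -/
theorem stmt_1 (μ : V → V → ℝ) (Ω : Finset V)
    (hsym : ∀ x y, μ x y = μ y x) (hnn : ∀ x y, 0 ≤ μ x y)
    (hconn : TilConnected μ Ω) (hcard : 2 ≤ (bdry μ Ω).card) :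
    ∀ a k : ℝ, 0 < a → 0 < k →
      lambda1 μ Ω ≥
        (2 * hE μ Ω * mu1 μ Ω k - a * (k + mu1 μ Ω k)) * a / (a ^ 2 + 2 * mu1 μ Ω k) :=
  stmt_1_general μ Ω hsym hnn hcard
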